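/- Let G be a finite DAG and G' the result of functionally eliminating a vertex T from G (add edges from each parent of T to each child of T, remove T). Then for any disjoint sets of vertices X, Y, Z of G not containing T: if X and Y are d-separated by Z in G, then X and Y are d-separated by Z in G'. -/

import Mathlib

/-- `Act E Z a d b`: there is a `Z`-active (undirected) walk from `a` to `b` in the
digraph `E`, where `d` records whether the last edge points into `b`. A non-collider
on the walk must be outside `Z`; a collider must have a descendant (possibly itself)
in `Z`. -/
inductive Act {V : Type*} (E : V → V → Prop) (Z : Set V) : V → Bool → V → Prop where
  | into {a b : V} : E a b → Act E Z a true b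
  | outof {a b : V} : E b a → Act E Z a false b
  | step_out {a m c : V} {d : Bool} :
      Act E Z a d m → E m c → m ∉ Z → Act E Z a true c
  | step_in {a m c : V} {d : Bool} :
      Act E Z a d m → E c m →
      (d = true → ∃ w, Relation.ReflTransGen E m w ∧ w ∈ Z) →
      (d = false → m ∉ Z) → Act E Z a false c

/-- `X` and `Y` are d-separated by `Z`: no active walk connects a vertex of `X` to a
vertex of `Y`. -/
def DSep {V : Type*} (E : V → V → Prop) (Z : Set V) (X Y : Set V) : Prop :=
  ∀ x ∈ X, ∀ y ∈ Y, ¬ ∃ d, Act E Z x d y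

/-- Functional elimination of a vertex `T` from a digraph. -/
def elimVertex {V : Type*} (E : V → V → Prop) (T : V) : V → V → Prop :=
  fun a b => a ≠ T ∧ b ≠ T ∧ (E a b ∨ (E a T ∧ E T b))

/-!
Every edge `a → b` of the eliminated graph is either an edge of `G` or the path `a → T → b`,
on which `T` is a non-collider. Replacing each edge of an active walk in `G'` by the
corresponding path of `G` therefore gives a walk in `G` that is active as soon as `T ∉ Z`: the
inserted vertex `T` is a non-collider outside `Z`, the other vertices keep their type, and a
descendant in `G'` is a descendant in `G`. So an active walk in `G'` yields one in `G`.
-/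

section ElimVertex

variable {V : Type*} {E : V → V → Prop} {T : V} {Z : Set V}

theorem transGen_of_elimVertex {a b : V} (h : elimVertex E T a b) : Relation.TransGen E a b := by
  obtain ⟨-, -, hab | ⟨haT, hTb⟩⟩ := h
  · exact .single hab
  · exact .tail (.single haT) hTb

theorem reflTransGen_of_reflTransGen_elimVertex {a b : V}
    (h : Relation.ReflTransGen (elimVertex E T) a b) : Relation.ReflTransGen E a b :=
  h.lift' id fun _ _ h => (transGen_of_elimVertex h).to_reflTransGen

theorem Act.of_elimVertex (hTZ : T ∉ Z) {a b : V} {d : Bool}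
    (h : Act (elimVertex E T) Z a d b) : Act E Z a d b := by
  induction h with
  | into h =>
    obtain ⟨-, -, hE | ⟨haT, hTb⟩⟩ := h
    · exact .into hE
    · exact .step_out (.into haT) hTb hTZ
  | outof h =>
    obtain ⟨-, -, hE | ⟨hbT, hTa⟩⟩ := h
    · exact .outof hE
    · exact .step_in (.outof hTa) hbT (by simp) fun _ => hTZ
  | step_out _ h hm ih =>
    obtain ⟨-, -, hE | ⟨hmT, hTc⟩⟩ := h
    · exact .step_out ih hE hm
    · exact .step_out (.step_out ih hmT hm) hTc hTZ
  | step_in _ h hcoll hnon ih =>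
    have hcoll' : _ = true → ∃ w, Relation.ReflTransGen E _ w ∧ w ∈ Z := fun hd =>
      (hcoll hd).imp fun _ => And.imp_left reflTransGen_of_reflTransGen_elimVertex
    obtain ⟨-, -, hE | ⟨hcT, hTm⟩⟩ := h
    · exact .step_in ih hE hcoll' hnon
    · exact .step_in (.step_in ih hTm hcoll' hnon) hcT (by simp) fun _ => hTZ

theorem DSep.elimVertex {X Y : Set V} (hTZ : T ∉ Z) (h : DSep E Z X Y) :
    DSep (elimVertex E T) Z X Y :=
  fun x hx y hy ⟨d, hact⟩ => h x hx y hy ⟨d, hact.of_elimVertex hTZ⟩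

end ElimVertex

theorem dsep_preserved_by_elimVertex_general {V : Type*}
    (E : V → V → Prop)
    (T : V) (X Y Z : Set V)
    (hT : T ∉ X ∪ Y ∪ Z) :
    DSep E Z X Y → DSep (elimVertex E T) Z X Y :=
  DSep.elimVertex fun hTZ => hT (Or.inr hTZ)

/-- Functional elimination of a vertex `T` preserves d-separation of
disjoint sets `X`, `Y`, `Z` not containing `T`. -/
theorem dsep_preserved_by_elimVertex {V : Type*} [Fintype V]
    (E : V → V → Prop) (hacyc : ∀ v, ¬ Relation.TransGen E v v)
    (T : V) (X Y Z : Set V)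
    (hXY : Disjoint X Y) (hXZ : Disjoint X Z) (hYZ : Disjoint Y Z)
    (hT : T ∉ X ∪ Y ∪ Z) :
    DSep E Z X Y → DSep (elimVertex E T) Z X Y :=
  dsep_preserved_by_elimVertex_general E T X Y Z hT
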